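/- Let $\Xi$ be a $1$-separated subset of a geometrically doubling metric space $(\mathcal{X},d)$ with constant $N_0$. Then for every $\varepsilon > 0$ there exists a constant $C$, depending only on $\varepsilon$ and $N_0$, such that $\sup_{a \in \mathcal{X}} e^{\varepsilon d(a,\Xi)/2} \sum_{b \in \Xi} e^{-\varepsilon d(a,b)} \le C$, where $d(a,\Xi) = \inf_{b \in \Xi} d(a,b)$. -/

import Mathlib

open Metric

open scoped ENNReal

/-!
Iterating the doubling condition `k` times covers a ball of radius `2 ^ k / 2` by `N₀ ^ k` balls
of radius `1 / 2`, each of which contains at most one point of the `1`-separated set `Ξ`. Taking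
`2 ^ k ≈ n` and `N₀ ≤ 2 ^ p`, the ball of radius `n + 1` about `a` contains `O(n ^ p)` points
of `Ξ`. Grouping the `b ∈ Ξ` by `⌊d(a, b)⌋` and using `d(a, Ξ) ≤ d(a, b)`, the weighted sum is
dominated by `∑ₙ (4 (n + 1)) ^ p e^{-ε n / 2} < ∞`.
-/

theorem ENNReal.tsum_le_tsum_encard_fiber_mul {ι : Type*} {f : ι → ℝ≥0∞} {g : ℕ → ℝ≥0∞}
    {φ : ι → ℕ} {M : ℕ → ℕ} (hfg : ∀ i, f i ≤ g (φ i)) (hM : ∀ n, (φ ⁻¹' {n}).encard ≤ M n) :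
    ∑' i, f i ≤ ∑' n, M n * g n := by
  rw [← ENNReal.tsum_fiberwise f φ]
  refine ENNReal.tsum_le_tsum fun n => ?_
  calc ∑' i : φ ⁻¹' {n}, f i ≤ ∑' _ : φ ⁻¹' {n}, g n :=
        ENNReal.tsum_le_tsum fun i => (hfg i).trans_eq (congrArg g i.2)
    _ = (φ ⁻¹' {n}).encard * g n := ENNReal.tsum_const _
    _ ≤ M n * g n := by
        gcongr
        exact_mod_cast ENat.toENNReal_le.mpr (hM n)

theorem summable_pow_succ_mul_geometric_of_norm_lt_one (p : ℕ) {r : ℝ} (hr : ‖r‖ < 1) :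
    Summable fun n : ℕ => ((n : ℝ) + 1) ^ p * r ^ n := by
  rcases eq_or_ne r 0 with rfl | hr0
  · refine summable_of_ne_finset_zero (s := {0}) fun n hn => ?_
    rw [zero_pow (by simpa using hn), mul_zero]
  have hshift := (summable_nat_add_iff (f := fun n : ℕ => (n : ℝ) ^ p * r ^ n) 1).mpr
    (summable_pow_mul_geometric_of_norm_lt_one p hr)
  refine (hshift.mul_left r⁻¹).congr fun n => ?_
  simp only [Nat.cast_add_one, pow_succ]
  field_simp

theorem ofReal_exp_infDist_mul_le_pow_floor {X : Type*} [MetricSpace X] {ε : ℝ} (hε : 0 ≤ ε)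
    {s : Set X} (a : X) {b : X} (hb : b ∈ s) :
    ENNReal.ofReal (Real.exp (ε * infDist a s / 2)) * ENNReal.ofReal (Real.exp (-(ε * dist a b))) ≤
      ENNReal.ofReal (Real.exp (-(ε / 2)) ^ ⌊dist a b⌋₊) := by
  rw [← ENNReal.ofReal_mul (Real.exp_nonneg _), ← Real.exp_add, ← Real.exp_nat_mul]
  refine ENNReal.ofReal_le_ofReal (Real.exp_le_exp.mpr ?_)
  have hinf := infDist_le_dist_of_mem (x := a) hb
  have hfloor := Nat.floor_le (dist_nonneg (x := a) (y := b))
  nlinarith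

def GeometricallyDoubling (X : Type*) [MetricSpace X] (N₀ : ℕ) : Prop :=
  ∀ (x : X) (r : ℝ), 0 < r → ∃ s : Finset X, s.card ≤ N₀ ∧ ball x r ⊆ ⋃ y ∈ s, ball y (r / 2)

namespace GeometricallyDoubling

variable {X : Type*} [MetricSpace X] {N₀ : ℕ} {Ξ : Set X}

theorem encard_inter_ball_le_pow (hX : GeometricallyDoubling X N₀)
    (hΞ : Ξ.Pairwise fun a b => 1 ≤ dist a b) (k : ℕ) :
    ∀ (x : X) {r : ℝ}, r ≤ 2 ^ k / 2 → (Ξ ∩ ball x r).encard ≤ N₀ ^ k := by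
  induction k with
  | zero =>
    intro x r hr
    rw [pow_zero, Set.encard_le_one_iff]
    rintro b c ⟨hb, hbx⟩ ⟨hc, hcx⟩
    by_contra hbc
    linarith [hΞ hb hc hbc, mem_ball.mp hbx, mem_ball.mp hcx, dist_triangle_right b c x]
  | succ k ih =>
    intro x r hr
    rcases le_or_gt r 0 with hr0 | hr0
    · simp [ball_eq_empty.mpr hr0]
    obtain ⟨s, hs, hcover⟩ := hX x r hr0
    have hr2 : r / 2 ≤ 2 ^ k / 2 := by rw [pow_succ] at hr; linarith
    calc (Ξ ∩ ball x r).encard ≤ (⋃ y ∈ s, Ξ ∩ ball y (r / 2)).encard := by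
          refine Set.encard_le_encard fun b ⟨hb, hbx⟩ => ?_
          obtain ⟨y, hy, hby⟩ := Set.mem_iUnion₂.mp (hcover hbx)
          exact Set.mem_iUnion₂.mpr ⟨y, hy, hb, hby⟩
      _ ≤ ∑ y ∈ s, (Ξ ∩ ball y (r / 2)).encard := s.set_encard_biUnion_le _
      _ ≤ s.card • (N₀ ^ k : ℕ∞) := Finset.sum_le_card_nsmul _ _ _ fun y _ => ih y hr2
      _ ≤ N₀ ^ (k + 1) := by
          rw [nsmul_eq_mul, pow_succ, mul_comm]
          gcongr

theorem encard_inter_ball_le_poly (hX : GeometricallyDoubling X N₀)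
    (hΞ : Ξ.Pairwise fun a b => 1 ≤ dist a b) {p : ℕ} (hp : N₀ ≤ 2 ^ p) (x : X) (n : ℕ) :
    (Ξ ∩ ball x (n + 1)).encard ≤ ((4 * (n + 1)) ^ p : ℕ) := by
  set k := Nat.log 2 (n + 1) + 2
  have hball : ((n : ℝ) + 1) ≤ 2 ^ k / 2 := by
    have hlog : ((n : ℝ) + 1) < 2 ^ (Nat.log 2 (n + 1) + 1) := by
      exact_mod_cast Nat.lt_pow_succ_log_self one_lt_two (n + 1)
    simp only [k, pow_succ] at hlog ⊢
    linarith
  have hk : 2 ^ k ≤ 4 * (n + 1) := by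
    have hlog := Nat.pow_log_le_self 2 (x := n + 1) n.succ_ne_zero
    simp only [k, pow_add]
    omega
  calc (Ξ ∩ ball x (n + 1)).encard ≤ N₀ ^ k := hX.encard_inter_ball_le_pow hΞ k x hball
    _ ≤ ((4 * (n + 1)) ^ p : ℕ) := by
        norm_cast
        calc N₀ ^ k ≤ (2 ^ p) ^ k := Nat.pow_le_pow_left hp k
          _ = (2 ^ k) ^ p := by rw [← pow_mul, ← pow_mul, mul_comm]
          _ ≤ (4 * (n + 1)) ^ p := Nat.pow_le_pow_left hk p

theorem tsum_ofReal_pow_floor_dist_le (hX : GeometricallyDoubling X N₀)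
    (hΞ : Ξ.Pairwise fun a b => 1 ≤ dist a b) {p : ℕ} (hp : N₀ ≤ 2 ^ p) (x : X) (r : ℝ) :
    ∑' b : Ξ, ENNReal.ofReal (r ^ ⌊dist x b⌋₊) ≤
      ∑' n : ℕ, ((4 * (n + 1)) ^ p : ℕ) * ENNReal.ofReal (r ^ n) := by
  refine ENNReal.tsum_le_tsum_encard_fiber_mul (fun b => le_rfl) fun n => ?_
  refine le_trans ?_ (hX.encard_inter_ball_le_poly hΞ hp x n)
  refine Set.encard_le_encard_of_injOn (fun b hb => ⟨b.2, ?_⟩) Subtype.val_injective.injOn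
  rw [mem_ball']
  exact hb ▸ Nat.lt_floor_add_one _

end GeometricallyDoubling

theorem stmt_4_general {X : Type*} [MetricSpace X] (N₀ : ℕ)
    (hgd : ∀ (x : X) (r : ℝ), 0 < r → ∃ s : Finset X,
      s.card ≤ N₀ ∧ ball x r ⊆ ⋃ y ∈ s, ball y (r / 2))
    (Ξ : Set X) (hΞ : ∀ a ∈ Ξ, ∀ b ∈ Ξ, a ≠ b → 1 ≤ dist a b)
    (ε : ℝ) (hε : 0 < ε) :
    ∃ C : ℝ, 0 < C ∧ ∀ a : X,
      ENNReal.ofReal (Real.exp (ε * Metric.infDist a Ξ / 2)) *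
        ∑' b : Ξ, ENNReal.ofReal (Real.exp (-(ε * dist a (b : X)))) ≤
        ENNReal.ofReal C := by
  obtain ⟨p, hp⟩ : ∃ p, N₀ ≤ 2 ^ p := ⟨N₀, Nat.lt_two_pow_self.le⟩
  set r := Real.exp (-(ε / 2))
  have hr : ‖r‖ < 1 := by
    rw [Real.norm_of_nonneg (Real.exp_nonneg _), Real.exp_lt_one_iff]; linarith
  set w : ℕ → ℝ := fun n => ((4 * (n + 1)) ^ p : ℕ) * r ^ n
  have hw : Summable w := by
    refine ((summable_pow_succ_mul_geometric_of_norm_lt_one p hr).mul_left (4 ^ p)).congr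
      fun n => ?_
    simp only [w]; push_cast; rw [mul_pow]; ring
  have hw0 : 0 ≤ ∑' n, w n := tsum_nonneg fun n => by positivity
  refine ⟨∑' n, w n + 1, by positivity, fun a => ?_⟩
  calc _ = ∑' b : Ξ, ENNReal.ofReal (Real.exp (ε * infDist a Ξ / 2)) *
          ENNReal.ofReal (Real.exp (-(ε * dist a b))) := ENNReal.tsum_mul_left.symm
    _ ≤ ∑' b : Ξ, ENNReal.ofReal (r ^ ⌊dist a b⌋₊) :=
        ENNReal.tsum_le_tsum fun b => ofReal_exp_infDist_mul_le_pow_floor hε.le a b.2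
    _ ≤ ∑' n : ℕ, ((4 * (n + 1)) ^ p : ℕ) * ENNReal.ofReal (r ^ n) :=
        GeometricallyDoubling.tsum_ofReal_pow_floor_dist_le hgd hΞ hp a r
    _ = ENNReal.ofReal (∑' n, w n) := by
        rw [ENNReal.ofReal_tsum_of_nonneg (fun n => by positivity) hw]
        refine tsum_congr fun n => ?_
        rw [ENNReal.ofReal_mul (by positivity), ENNReal.ofReal_natCast]
    _ ≤ ENNReal.ofReal (∑' n, w n + 1) := ENNReal.ofReal_le_ofReal (by linarith)

/-- For a `1`-separated set `Ξ` in a geometrically doubling metric space and any `ε > 0`,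
`e^{ε d(a,Ξ)/2} ∑_{b ∈ Ξ} e^{-ε d(a,b)}` is bounded uniformly in `a`. -/
theorem stmt_4 {X : Type*} [MetricSpace X] (N₀ : ℕ) (hN₀ : 0 < N₀)
    (hgd : ∀ (x : X) (r : ℝ), 0 < r → ∃ s : Finset X,
      s.card ≤ N₀ ∧ ball x r ⊆ ⋃ y ∈ s, ball y (r / 2))
    (Ξ : Set X) (hΞ : ∀ a ∈ Ξ, ∀ b ∈ Ξ, a ≠ b → 1 ≤ dist a b)
    (ε : ℝ) (hε : 0 < ε) :
    ∃ C : ℝ, 0 < C ∧ ∀ a : X,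
      ENNReal.ofReal (Real.exp (ε * Metric.infDist a Ξ / 2)) *
        ∑' b : Ξ, ENNReal.ofReal (Real.exp (-(ε * dist a (b : X)))) ≤
        ENNReal.ofReal C :=
  stmt_4_general N₀ hgd Ξ hΞ ε hε
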